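/- arXiv:2103.11812 — 11 statements merged into one kernel-verified Lean document; each statement's English description precedes it below -/
import Mathlib

section
/- GT_X(t) ≥ 0 for all t ∈ D¹_X if X is IFR (i.e., the hazard rate h_X(t) = H_X'(t) is nondecreasing), and GT_X(t) ≤ 0 for all t ∈ D¹_X if X is DFR (h_X nonincreasing). -/
open MeasureTheory intervalIntegral

noncomputable def GTindex (H : ℝ → ℝ) (t : ℝ) : ℝ :=
  1 - 2 / (t * H t) * ∫ u in (0:ℝ)..t, H u

/-!
IFR means that the cumulative hazard `H` is convex on `[0, ∞)`. Since `H 0 = 0`, convexity puts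
`H` below its chord `u ↦ u / t * H t` on `[0, t]`, so `∫₀ᵗ H ≤ t H(t) / 2`, which is `GT_X(t) ≥ 0`.
For DFR, `H` is concave and every inequality reverses.
-/

open Set

section ConvexityFromDerivative

variable {D : Set ℝ} {f f' : ℝ → ℝ}

theorem MonotoneOn.convexOn_of_hasDerivAt (hD : Convex ℝ D)
    (hf : ∀ x ∈ D, HasDerivAt f (f' x) x) (hf' : MonotoneOn f' D) : ConvexOn ℝ D f := by
  refine MonotoneOn.convexOn_of_deriv hD (fun x hx ↦ (hf x hx).continuousAt.continuousWithinAt)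
    (fun x hx ↦ (hf x (interior_subset hx)).differentiableAt.differentiableWithinAt) ?_
  intro a ha b hb hab
  rw [(hf a (interior_subset ha)).deriv, (hf b (interior_subset hb)).deriv]
  exact hf' (interior_subset ha) (interior_subset hb) hab

theorem AntitoneOn.concaveOn_of_hasDerivAt (hD : Convex ℝ D)
    (hf : ∀ x ∈ D, HasDerivAt f (f' x) x) (hf' : AntitoneOn f' D) : ConcaveOn ℝ D f :=
  neg_convexOn_iff.mp <| MonotoneOn.convexOn_of_hasDerivAt hD
    (fun x hx ↦ (hf x hx).neg) (fun _ ha _ hb hab ↦ neg_le_neg (hf' ha hb hab))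

end ConvexityFromDerivative

section ChordBound

variable {f : ℝ → ℝ} {t : ℝ}

theorem ConvexOn.le_div_mul_of_map_zero (hf : ConvexOn ℝ (Icc 0 t) f) (hf0 : f 0 = 0)
    (ht : 0 < t) {u : ℝ} (hu : u ∈ Icc 0 t) : f u ≤ u / t * f t := by
  have hut : u / t ≤ 1 := (div_le_one ht).2 hu.2
  have hconv := hf.2 (left_mem_Icc.2 ht.le) (right_mem_Icc.2 ht.le) (sub_nonneg.2 hut)
    (div_nonneg hu.1 ht.le) (sub_add_cancel 1 (u / t))
  simpa only [smul_eq_mul, mul_zero, zero_add, hf0, div_mul_cancel₀ u ht.ne'] using hconv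

theorem integral_div_mul_eq (ht : 0 < t) (c : ℝ) :
    ∫ u in (0:ℝ)..t, u / t * c = t * c / 2 := by
  simp_rw [div_mul_eq_mul_div, mul_comm _ c, mul_div_assoc]
  rw [intervalIntegral.integral_const_mul, intervalIntegral.integral_div, integral_id]
  field_simp
  ring

theorem ConvexOn.intervalIntegral_le_of_map_zero (hf : ConvexOn ℝ (Icc 0 t) f) (hf0 : f 0 = 0)
    (ht : 0 < t) (hint : IntervalIntegrable f volume 0 t) :
    ∫ u in (0:ℝ)..t, f u ≤ t * f t / 2 := by
  have hchord : IntervalIntegrable (fun u ↦ u / t * f t) volume 0 t :=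
    ((continuous_id.div_const t).mul continuous_const).intervalIntegrable 0 t
  calc ∫ u in (0:ℝ)..t, f u ≤ ∫ u in (0:ℝ)..t, u / t * f t :=
        integral_mono_on ht.le hint hchord fun _ hu ↦ hf.le_div_mul_of_map_zero hf0 ht hu
    _ = t * f t / 2 := integral_div_mul_eq ht (f t)

theorem ConcaveOn.le_intervalIntegral_of_map_zero (hf : ConcaveOn ℝ (Icc 0 t) f) (hf0 : f 0 = 0)
    (ht : 0 < t) (hint : IntervalIntegrable f volume 0 t) :
    t * f t / 2 ≤ ∫ u in (0:ℝ)..t, f u := by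
  have := hf.neg.intervalIntegral_le_of_map_zero (by simp [hf0]) ht hint.neg
  simp only [Pi.neg_apply, intervalIntegral.integral_neg] at this
  linarith

end ChordBound

section GTindex

variable {H : ℝ → ℝ} {t : ℝ}

theorem GTindex_nonneg_iff (htH : 0 < t * H t) :
    0 ≤ GTindex H t ↔ ∫ u in (0:ℝ)..t, H u ≤ t * H t / 2 := by
  rw [GTindex, sub_nonneg, div_mul_eq_mul_div, div_le_one htH, le_div_iff₀ two_pos, mul_comm]

theorem GTindex_nonpos_iff (htH : 0 < t * H t) :
    GTindex H t ≤ 0 ↔ t * H t / 2 ≤ ∫ u in (0:ℝ)..t, H u := by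
  rw [GTindex, sub_nonpos, div_mul_eq_mul_div, one_le_div htH, div_le_iff₀ two_pos, mul_comm _ (2 : ℝ)]

end GTindex

/-- If `X` is IFR then `GT_X ≥ 0` on `D¹_X`; if `X` is DFR then `GT_X ≤ 0` on `D¹_X`.
Here `H` is the (differentiable) cumulative hazard, `h` its derivative (the hazard rate),
and points of `D¹_X` are the `t > 0` with `0 < H t` (i.e. `0 < P(X > t) < 1`). -/
theorem stmt1 (H h : ℝ → ℝ) (hH0 : H 0 = 0)
    (hderiv : ∀ u, 0 ≤ u → HasDerivAt H (h u) u) :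
    (MonotoneOn h (Set.Ici 0) → ∀ t, 0 < t → 0 < H t → 0 ≤ GTindex H t) ∧
    (AntitoneOn h (Set.Ici 0) → ∀ t, 0 < t → 0 < H t → GTindex H t ≤ 0) := by
  have hint : ∀ t, 0 < t → IntervalIntegrable H volume 0 t := fun t ht ↦
    ContinuousOn.intervalIntegrable_of_Icc ht.le fun u hu ↦
      (hderiv u hu.1).continuousAt.continuousWithinAt
  constructor
  · intro hmono t ht hHt
    have hconv := (hmono.convexOn_of_hasDerivAt (convex_Ici 0) hderiv).subset
      Icc_subset_Ici_self (convex_Icc 0 t)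
    exact (GTindex_nonneg_iff (by positivity)).2
      (hconv.intervalIntegral_le_of_map_zero hH0 ht (hint t ht))
  · intro hanti t ht hHt
    have hconc := (hanti.concaveOn_of_hasDerivAt (convex_Ici 0) hderiv).subset
      Icc_subset_Ici_self (convex_Icc 0 t)
    exact (GTindex_nonpos_iff (by positivity)).2
      (hconc.le_intervalIntegral_of_map_zero hH0 ht (hint t ht))
end

section
/- If H_X(t)/t is nondecreasing on D¹_X (i.e., X is IFRA), then GT_X(t) ≥ 0 for all t ∈ D¹_X. -/
open MeasureTheory intervalIntegral

/-- If `H_X(t)/t` is nondecreasing (X is IFRA) then `GT_X(t) ≥ 0` for all `t ∈ D¹_X`. -/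
theorem stmt2 (H : ℝ → ℝ) (hH0 : H 0 = 0) (hHcont : Continuous H)
    (hIFRA : MonotoneOn (fun t => H t / t) (Set.Ioi (0:ℝ))) :
    ∀ t, 0 < t → 0 < H t → 0 ≤ GTindex H t := by
  intro t ht hHt
  have key : ∫ u in (0:ℝ)..t, H u ≤ ∫ u in (0:ℝ)..t, (H t / t) * u := by
    apply intervalIntegral.integral_mono_on ht.le
    · exact hHcont.intervalIntegrable 0 t
    · exact ((continuous_const.mul continuous_id).intervalIntegrable 0 t)
    · intro u hu
      rcases eq_or_lt_of_le hu.1 with h | h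
      · simp [← h, hH0]
      · have := hIFRA (Set.mem_Ioi.2 h) (Set.mem_Ioi.2 ht) hu.2
        calc H u = (H u / u) * u := by field_simp
          _ ≤ (H t / t) * u := by
              exact mul_le_mul_of_nonneg_right this h.le
  have hval : ∫ u in (0:ℝ)..t, (H t / t) * u = t * H t / 2 := by
    rw [intervalIntegral.integral_const_mul, integral_id]
    field_simp
    ring
  rw [hval] at key
  have hpos : 0 < t * H t := mul_pos ht hHt
  unfold GTindex
  rw [sub_nonneg, div_mul_eq_mul_div, div_le_one hpos]
  linarith
end

section
/- GT_X(t) = 0 for all t ∈ D¹_X if and only if X has an exponential distribution (i.e., H_X(t) = λt for some λ > 0). -/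
/- If `GT_X` vanishes, `F t = ∫₀ᵗ H` solves `t F' = 2 F` on `(0, ∞)`, so `F t / t²` has zero
derivative there; hence `F t = c t²` and `H = F' = 2 c t`. Conversely, for `H t = λ t` one has
`∫₀ᵗ H = t H(t) / 2`, which is exactly `GT_X(t) = 0`. -/

open MeasureTheory intervalIntegral

theorem GTindex_eq_zero_iff {H : ℝ → ℝ} {t : ℝ} (ht : t ≠ 0) (hHt : H t ≠ 0) :
    GTindex H t = 0 ↔ 2 * ∫ u in (0:ℝ)..t, H u = t * H t := by
  rw [GTindex, sub_eq_zero, eq_comm, div_mul_eq_mul_div, div_eq_one_iff_eq (mul_ne_zero ht hHt)]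

theorem GTindex_congr {H K : ℝ → ℝ} {t : ℝ} (ht : 0 ≤ t) (hHK : Set.EqOn H K (Set.Icc 0 t)) :
    GTindex H t = GTindex K t := by
  have hint : ∫ u in (0:ℝ)..t, H u = ∫ u in (0:ℝ)..t, K u :=
    integral_congr (by rwa [Set.uIcc_of_le ht])
  rw [GTindex, GTindex, hint, hHK ⟨ht, le_rfl⟩]

theorem GTindex_const_mul_id {l t : ℝ} (hl : l ≠ 0) (ht : t ≠ 0) :
    GTindex (fun u => l * u) t = 0 := by
  rw [GTindex_eq_zero_iff ht (mul_ne_zero hl ht), intervalIntegral.integral_const_mul, integral_id]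
  ring

theorem exists_eq_mul_sq_of_two_mul_eq_mul_deriv {F f : ℝ → ℝ}
    (hF : ∀ t, 0 < t → HasDerivAt F (f t) t) (hode : ∀ t, 0 < t → 2 * F t = t * f t) :
    ∃ c, ∀ t, 0 < t → F t = c * t ^ 2 := by
  have hderiv : ∀ t, 0 < t → HasDerivAt (fun s => F s / s ^ 2) 0 t := by
    intro t ht
    refine ((hF t ht).fun_div (hasDerivAt_pow 2 t) (by positivity)).congr_deriv ?_
    exact div_eq_zero_iff.mpr (.inl (by linear_combination -t * hode t ht))
  obtain ⟨c, hc⟩ := isOpen_Ioi.exists_is_const_of_deriv_eq_zero isPreconnected_Ioi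
    (fun t ht => (hderiv t ht).differentiableAt.differentiableWithinAt)
    (fun t ht => (hderiv t ht).deriv)
  refine ⟨c, fun t ht => ?_⟩
  rw [← hc t ht]
  field_simp

/-- `GT_X(t) = 0` for all `t ∈ D¹_X = (0,∞)` iff `X` is exponential, i.e.
`H_X(t) = λ t` for some `λ > 0`. -/
theorem stmt3 (H : ℝ → ℝ) (hH0 : H 0 = 0) (hHcont : Continuous H)
    (hHpos : ∀ t, 0 < t → 0 < H t) :
    (∀ t, 0 < t → GTindex H t = 0) ↔ ∃ l : ℝ, 0 < l ∧ ∀ t, 0 ≤ t → H t = l * t := by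
  constructor
  · intro hGT
    have hode : ∀ t, 0 < t → 2 * ∫ u in (0:ℝ)..t, H u = t * H t := fun t ht =>
      (GTindex_eq_zero_iff ht.ne' (hHpos t ht).ne').mp (hGT t ht)
    obtain ⟨c, hc⟩ := exists_eq_mul_sq_of_two_mul_eq_mul_deriv
      (fun t _ => integral_hasDerivAt_right (hHcont.intervalIntegrable 0 t)
        (hHcont.stronglyMeasurableAtFilter _ _) hHcont.continuousAt) hode
    have hlin : ∀ t, 0 < t → H t = 2 * c * t := fun t ht => by
      have := hode t ht
      rw [hc t ht] at this
      exact mul_left_cancel₀ ht.ne' (by linear_combination -this)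
    refine ⟨2 * c, by simpa [hlin 1 one_pos] using hHpos 1 one_pos, fun t ht => ?_⟩
    rcases ht.eq_or_lt with rfl | ht
    · simp [hH0]
    · exact hlin t ht
  · rintro ⟨l, hl, hlin⟩ t ht
    rw [GTindex_congr ht.le fun u hu => hlin u hu.1]
    exact GTindex_const_mul_id hl.ne' ht.ne'
end

section
/- A random lifetime X with support (0,∞) and differentiable cumulative hazard has a Weibull distribution (i.e., P(X > t) = exp(-c·t^m) for some c > 0, m > 0) if and only if its Gini-type index GT_X(t) is constant on (0,∞); moreover, if GT_X(t) = r for all t with -1 < r < 1, then the Weibull shape parameter is m = (1+r)/(1-r). -/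
/-! A Weibull hazard `c t^m` integrates to `t H(t) / (m+1)`, so its index is `(m-1)/(m+1)`.
Conversely `GT_X ≡ r` says that `F(t) = ∫₀ᵗ H` solves the Euler equation `t F' = a F` with
`a = 2/(1-r)`; hence `F(t) t^(-a)` is constant, `F = C t^a` and `H = F' = a C t^(a-1)`, where
`a - 1 = (1+r)/(1-r)`. -/

open MeasureTheory intervalIntegral

open Set

theorem GTindex_of_eq_mul_rpow {H : ℝ → ℝ} {c m : ℝ} (hc : c ≠ 0) (hm : -1 < m)
    (hH : ∀ t, 0 ≤ t → H t = c * t ^ m) {t : ℝ} (ht : 0 < t) :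
    GTindex H t = (m - 1) / (m + 1) := by
  have hm1 : m + 1 ≠ 0 := by linarith
  have hint : ∫ u in (0:ℝ)..t, H u = c * t ^ (m + 1) / (m + 1) := by
    rw [integral_congr fun u hu => hH u (by rw [uIcc_of_le ht.le] at hu; exact hu.1),
      intervalIntegral.integral_const_mul, integral_rpow (Or.inl hm), Real.zero_rpow hm1]
    ring
  have htm : t ^ m ≠ 0 := (Real.rpow_pos_of_pos ht m).ne'
  rw [GTindex, hint, hH t ht.le, Real.rpow_add_one ht.ne']
  field_simp
  ring

theorem integral_eq_of_GTindex_eq {H : ℝ → ℝ} {t r : ℝ} (htH : t * H t ≠ 0)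
    (h : GTindex H t = r) : ∫ u in (0:ℝ)..t, H u = (1 - r) / 2 * (t * H t) := by
  rw [GTindex] at h
  have h' : 2 * (∫ u in (0:ℝ)..t, H u) / (t * H t) = 1 - r := by rw [← h, mul_div_right_comm]; ring
  rw [div_eq_iff htH] at h'
  linear_combination h' / 2

theorem hasDerivAt_integral_of_continuousOn_Ici {H : ℝ → ℝ} (hH : ContinuousOn H (Ici 0))
    {t : ℝ} (ht : 0 < t) : HasDerivAt (fun s => ∫ u in (0:ℝ)..s, H u) (H t) t :=
  integral_hasDerivAt_right
    ((hH.mono Icc_subset_Ici_self).intervalIntegrable_of_Icc ht.le)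
    ((hH.mono Ioi_subset_Ici_self).stronglyMeasurableAtFilter isOpen_Ioi t ht)
    (hH.continuousAt (Ici_mem_nhds ht))

theorem eq_mul_rpow_of_hasDerivAt_of_mul_eq {F f : ℝ → ℝ} {a : ℝ}
    (hF : ∀ t, 0 < t → HasDerivAt F (f t) t) (hode : ∀ t, 0 < t → t * f t = a * F t)
    {t : ℝ} (ht : 0 < t) : F t = F 1 * t ^ a := by
  set φ : ℝ → ℝ := fun s => F s * s ^ (-a)
  have hφ : ∀ s, 0 < s → HasDerivAt φ 0 s := by
    intro s hs
    refine ((hF s hs).mul (Real.hasDerivAt_rpow_const (p := -a) (Or.inl hs.ne'))).congr_deriv ?_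
    rw [show s ^ (-a) = s ^ (-a - 1) * s by rw [← Real.rpow_add_one hs.ne']; ring_nf]
    linear_combination (s ^ (-a - 1)) * hode s hs
  have hconst : φ t = φ 1 :=
    isOpen_Ioi.is_const_of_deriv_eq_zero isPreconnected_Ioi
      (fun s hs => (hφ s hs).differentiableAt.differentiableWithinAt)
      (fun s hs => (hφ s hs).deriv) ht (mem_Ioi.2 one_pos)
  simp only [φ, Real.one_rpow, mul_one] at hconst
  rw [← hconst, mul_assoc, ← Real.rpow_add ht, neg_add_cancel, Real.rpow_zero, mul_one]

theorem exists_eq_mul_rpow_of_GTindex_eq {H : ℝ → ℝ} (hH0 : H 0 = 0)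
    (hHcont : ContinuousOn H (Ici 0)) (hHpos : ∀ t, 0 < t → 0 < H t) {r : ℝ}
    (hr₁ : -1 < r) (hr₂ : r < 1) (hGT : ∀ t, 0 < t → GTindex H t = r) :
    ∃ c : ℝ, 0 < c ∧ ∀ t, 0 ≤ t → H t = c * t ^ ((1 + r) / (1 - r)) := by
  set F : ℝ → ℝ := fun s => ∫ u in (0:ℝ)..s, H u
  set a : ℝ := 2 / (1 - r)
  have h1r : 1 - r ≠ 0 := by linarith
  have hode : ∀ t, 0 < t → t * H t = a * F t := by
    intro t ht
    rw [show F t = _ from integral_eq_of_GTindex_eq (mul_pos ht (hHpos t ht)).ne' (hGT t ht)]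
    simp only [a]
    field_simp
  have hF1 : 0 < F 1 :=
    intervalIntegral_pos_of_pos_on
      ((hHcont.mono Icc_subset_Ici_self).intervalIntegrable_of_Icc zero_le_one)
      (fun x hx => hHpos x hx.1) one_pos
  refine ⟨a * F 1, mul_pos (div_pos two_pos (by linarith)) hF1, fun t ht => ?_⟩
  rcases ht.eq_or_lt with rfl | ht
  · rw [hH0, Real.zero_rpow (div_pos (by linarith) (by linarith)).ne', mul_zero]
  · have hFt : F t = F 1 * t ^ a := eq_mul_rpow_of_hasDerivAt_of_mul_eq
      (fun s hs => hasDerivAt_integral_of_continuousOn_Ici hHcont hs) hode ht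
    have hexp : (1 + r) / (1 - r) = a - 1 := by simp only [a]; field_simp; ring
    rw [hexp, Real.rpow_sub_one ht.ne']
    apply mul_left_cancel₀ ht.ne'
    rw [hode t ht, ← mul_div_assoc, mul_div_cancel₀ _ ht.ne', mul_assoc]
    exact congrArg (a * ·) hFt

theorem stmt4_general (H : ℝ → ℝ) (hH0 : H 0 = 0)
    (hHcont : ContinuousOn H (Set.Ici 0))
    (hHpos : ∀ t, 0 < t → 0 < H t) :
    ((∃ c m : ℝ, 0 < c ∧ 0 < m ∧ ∀ t, 0 ≤ t → H t = c * t ^ m) ↔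
      (∃ r : ℝ, -1 < r ∧ r < 1 ∧ ∀ t, 0 < t → GTindex H t = r)) ∧
    (∀ r : ℝ, -1 < r → r < 1 → (∀ t, 0 < t → GTindex H t = r) →
      ∃ c : ℝ, 0 < c ∧ ∀ t, 0 ≤ t → H t = c * t ^ ((1 + r) / (1 - r))) := by
  refine ⟨⟨?_, ?_⟩, fun r hr₁ hr₂ => exists_eq_mul_rpow_of_GTindex_eq hH0 hHcont hHpos hr₁ hr₂⟩
  · rintro ⟨c, m, hc, hm, hH⟩
    have hm1 : 0 < m + 1 := by linarith
    exact ⟨(m - 1) / (m + 1), (lt_div_iff₀ hm1).2 (by linarith), (div_lt_one hm1).2 (by linarith),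
      fun t ht => GTindex_of_eq_mul_rpow hc.ne' (by linarith) hH ht⟩
  · rintro ⟨r, hr₁, hr₂, hGT⟩
    obtain ⟨c, hc, hH⟩ := exists_eq_mul_rpow_of_GTindex_eq hH0 hHcont hHpos hr₁ hr₂ hGT
    exact ⟨c, _, hc, div_pos (by linarith) (by linarith), hH⟩

/-- A lifetime with support `(0,∞)` and differentiable cumulative hazard `H` is Weibull
(`H t = c * t ^ m`, i.e. `P(X > t) = exp (-c t^m)`) iff its Gini-type index is constant;
moreover if `GT_X ≡ r` with `-1 < r < 1` then the shape parameter is `m = (1+r)/(1-r)`. -/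
theorem stmt4 (H : ℝ → ℝ) (hH0 : H 0 = 0)
    (hHcont : ContinuousOn H (Set.Ici 0))
    (hHdiff : ∀ t, 0 < t → DifferentiableAt ℝ H t)
    (hHpos : ∀ t, 0 < t → 0 < H t) :
    ((∃ c m : ℝ, 0 < c ∧ 0 < m ∧ ∀ t, 0 ≤ t → H t = c * t ^ m) ↔
      (∃ r : ℝ, -1 < r ∧ r < 1 ∧ ∀ t, 0 < t → GTindex H t = r)) ∧
    (∀ r : ℝ, -1 < r → r < 1 → (∀ t, 0 < t → GTindex H t = r) →
      ∃ c : ℝ, 0 < c ∧ ∀ t, 0 ≤ t → H t = c * t ^ ((1 + r) / (1 - r))) :=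
  stmt4_general H hH0 hHcont hHpos
end

section
/- For random lifetimes X and Y with differentiable cumulative hazards, GT_X(t) ≤ GT_Y(t) for all t ∈ D¹ if and only if the ratio (∫₀ᵗ H_Y(u) du)/(∫₀ᵗ H_X(u) du) is nondecreasing in t on D¹. -/
open MeasureTheory intervalIntegral

/-- `X ≤_GT Y` (pointwise comparison of Gini-type indexes on `D¹ = (0,b)`) holds iff
`(∫₀ᵗ H_Y)/(∫₀ᵗ H_X)` is nondecreasing on `D¹`. -/
theorem stmt5 (HX HY : ℝ → ℝ) (b : ℝ) (hb : 0 < b)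
    (hHX0 : HX 0 = 0) (hHY0 : HY 0 = 0)
    (hHXcont : ContinuousOn HX (Set.Ico 0 b)) (hHYcont : ContinuousOn HY (Set.Ico 0 b))
    (hHXpos : ∀ t ∈ Set.Ioo (0:ℝ) b, 0 < HX t)
    (hHYpos : ∀ t ∈ Set.Ioo (0:ℝ) b, 0 < HY t) :
    (∀ t ∈ Set.Ioo (0:ℝ) b, GTindex HX t ≤ GTindex HY t) ↔
      MonotoneOn (fun t => (∫ u in (0:ℝ)..t, HY u) / ∫ u in (0:ℝ)..t, HX u)
        (Set.Ioo (0:ℝ) b) := by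
  set IX : ℝ → ℝ := fun t => ∫ u in (0:ℝ)..t, HX u with hIXdef
  set IY : ℝ → ℝ := fun t => ∫ u in (0:ℝ)..t, HY u with hIYdef
  have hXopen : ContinuousOn HX (Set.Ioo 0 b) := hHXcont.mono Set.Ioo_subset_Ico_self
  have hYopen : ContinuousOn HY (Set.Ioo 0 b) := hHYcont.mono Set.Ioo_subset_Ico_self
  -- integrability on [0,t] for t ∈ Ioo 0 b
  have hXint : ∀ t ∈ Set.Ioo (0:ℝ) b, IntervalIntegrable HX volume 0 t := by
    intro t ht
    apply ContinuousOn.intervalIntegrable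
    apply hHXcont.mono
    rw [Set.uIcc_of_le ht.1.le]
    exact fun x hx => ⟨hx.1, lt_of_le_of_lt hx.2 ht.2⟩
  have hYint : ∀ t ∈ Set.Ioo (0:ℝ) b, IntervalIntegrable HY volume 0 t := by
    intro t ht
    apply ContinuousOn.intervalIntegrable
    apply hHYcont.mono
    rw [Set.uIcc_of_le ht.1.le]
    exact fun x hx => ⟨hx.1, lt_of_le_of_lt hx.2 ht.2⟩
  -- derivatives of IX, IY
  have hIXd : ∀ t ∈ Set.Ioo (0:ℝ) b, HasDerivAt IX (HX t) t := by
    intro t ht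
    exact intervalIntegral.integral_hasDerivAt_right (hXint t ht)
      (hXopen.stronglyMeasurableAtFilter isOpen_Ioo t ht)
      (hXopen.continuousAt (isOpen_Ioo.mem_nhds ht))
  have hIYd : ∀ t ∈ Set.Ioo (0:ℝ) b, HasDerivAt IY (HY t) t := by
    intro t ht
    exact intervalIntegral.integral_hasDerivAt_right (hYint t ht)
      (hYopen.stronglyMeasurableAtFilter isOpen_Ioo t ht)
      (hYopen.continuousAt (isOpen_Ioo.mem_nhds ht))
  -- positivity of IX, IY
  have hIXpos : ∀ t ∈ Set.Ioo (0:ℝ) b, 0 < IX t := by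
    intro t ht
    exact intervalIntegral.intervalIntegral_pos_of_pos_on (hXint t ht)
      (fun x hx => hHXpos x ⟨hx.1, hx.2.trans ht.2⟩) ht.1
  have hIYpos : ∀ t ∈ Set.Ioo (0:ℝ) b, 0 < IY t := by
    intro t ht
    exact intervalIntegral.intervalIntegral_pos_of_pos_on (hYint t ht)
      (fun x hx => hHYpos x ⟨hx.1, hx.2.trans ht.2⟩) ht.1
  -- the key pointwise reformulation
  have key : ∀ t ∈ Set.Ioo (0:ℝ) b,
      (GTindex HX t ≤ GTindex HY t ↔ HX t * IY t ≤ HY t * IX t) := by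
    intro t ht
    have htpos := ht.1
    have hx := hHXpos t ht
    have hy := hHYpos t ht
    unfold GTindex
    rw [sub_le_sub_iff_left, div_mul_eq_mul_div, div_mul_eq_mul_div,
      div_le_div_iff₀ (by positivity) (by positivity)]
    constructor <;> intro h <;> nlinarith
  -- derivative of ratio
  have hRd : ∀ t ∈ Set.Ioo (0:ℝ) b,
      HasDerivAt (fun t => IY t / IX t)
        ((HY t * IX t - IY t * HX t) / (IX t)^2) t := by
    intro t ht
    exact (hIYd t ht).div (hIXd t ht) (hIXpos t ht).ne'
  constructor
  · intro hGT
    apply monotoneOn_of_deriv_nonneg (convex_Ioo 0 b)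
    · intro t ht
      exact ((hRd t ht).continuousAt).continuousWithinAt
    · intro t ht
      rw [interior_Ioo] at ht
      exact (hRd t ht).differentiableAt.differentiableWithinAt
    · intro t ht
      rw [interior_Ioo] at ht
      rw [(hRd t ht).deriv]
      have h1 := (key t ht).1 (hGT t ht)
      have h2 := hIXpos t ht
      have : (0:ℝ) ≤ HY t * IX t - IY t * HX t := by nlinarith
      positivity
  · intro hmono t ht
    rw [key t ht]
    -- derivative is nonneg since the ratio is monotone on an open set
    have hd := hRd t ht
    have hd' : HasDerivWithinAt (fun t => IY t / IX t)
        ((HY t * IX t - IY t * HX t) / (IX t)^2) (Set.Ioi t) t :=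
      hd.hasDerivWithinAt
    have hslope := hasDerivWithinAt_iff_tendsto_slope.1 hd'
    rw [Set.diff_singleton_eq_self (Set.notMem_Ioi.2 le_rfl)] at hslope
    have hnn : 0 ≤ (HY t * IX t - IY t * HX t) / (IX t)^2 := by
      refine ge_of_tendsto hslope ?_
      have hmem : Set.Ioo t b ∈ nhdsWithin t (Set.Ioi t) :=
        Ioo_mem_nhdsGT_of_mem ⟨le_refl t, ht.2⟩
      filter_upwards [hmem] with y hy
      have hyI : y ∈ Set.Ioo (0:ℝ) b := ⟨ht.1.trans hy.1, hy.2⟩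
      have hle : IY t / IX t ≤ IY y / IX y := hmono ht hyI hy.1.le
      rw [slope_def_field]
      exact div_nonneg (sub_nonneg.2 hle) (sub_pos.2 hy.1).le
    have h2 := hIXpos t ht
    have h3 : 0 ≤ HY t * IX t - IY t * HX t := by
      have := (le_div_iff₀ (by positivity : (0:ℝ) < (IX t)^2)).1 hnn
      linarith
    linarith
end

section
/- Two random lifetimes X and Y with common support D¹ satisfy the proportional hazard rate model P(Y > t) = (P(X > t))^α for some α > 0 and all t ∈ D¹ if and only if GT_X(t) = GT_Y(t) for all t ∈ D¹. -/
/-!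
If `H_Y = α H_X` then the factor `α` cancels between `H_Y t` and `∫₀ᵗ H_Y` in `GT_Y t`.
Conversely, with `F = ∫₀ H_X` and `G = ∫₀ H_Y`, the equality `GT_X = GT_Y` says
`F · H_Y = G · H_X`, i.e. `F G' = G F'`, so `(G / F)' = 0` on the connected set `(0, b)`.
Hence `G = α F` with `α > 0` constant, and then `H_Y = G H_X / F = α H_X`.
-/

open MeasureTheory intervalIntegral

open Set

section GTindex

variable {H H₁ H₂ : ℝ → ℝ} {t : ℝ}

theorem GTindex_const_mul {c : ℝ} (hc : c ≠ 0) :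
    GTindex (fun u => c * H u) t = GTindex H t := by
  rw [GTindex, GTindex, intervalIntegral.integral_const_mul, div_mul_eq_mul_div, div_mul_eq_mul_div,
    mul_left_comm 2 c, mul_left_comm t c, mul_div_mul_left _ _ hc]

theorem GTindex_congr_s7 (ht : 0 < t) (h : EqOn H₁ H₂ (Ioc 0 t)) :
    GTindex H₁ t = GTindex H₂ t := by
  rw [GTindex, GTindex, h ⟨ht, le_rfl⟩,
    integral_congr_Ioo_of_le ht.le (h.mono Ioo_subset_Ioc_self)]

theorem GTindex_eq_GTindex_iff (ht : t ≠ 0) (h₁ : H₁ t ≠ 0) (h₂ : H₂ t ≠ 0) :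
    GTindex H₁ t = GTindex H₂ t ↔
      (∫ u in (0:ℝ)..t, H₁ u) * H₂ t = (∫ u in (0:ℝ)..t, H₂ u) * H₁ t := by
  rw [GTindex, GTindex, sub_right_inj, div_mul_eq_mul_div, div_mul_eq_mul_div,
    div_eq_div_iff (mul_ne_zero ht h₁) (mul_ne_zero ht h₂)]
  have h2t : 2 * t ≠ 0 := mul_ne_zero two_ne_zero ht
  constructor
  · intro h
    exact mul_left_cancel₀ h2t (by linear_combination h)
  · intro h
    linear_combination 2 * t * h

end GTindex

section CumulativeIntegral

variable {H : ℝ → ℝ} {a b t : ℝ}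

theorem intervalIntegrable_of_continuousOn_Ico (hH : ContinuousOn H (Ico a b))
    (ht : t ∈ Ioo a b) : IntervalIntegrable H volume a t :=
  (hH.mono (uIcc_of_le ht.1.le ▸ Icc_subset_Ico_right ht.2)).intervalIntegrable

theorem hasDerivAt_integral_of_continuousOn_Ico (hH : ContinuousOn H (Ico a b))
    (ht : t ∈ Ioo a b) : HasDerivAt (fun s => ∫ u in a..s, H u) (H t) t :=
  have hH' : ContinuousOn H (Ioo a b) := hH.mono Ioo_subset_Ico_self
  integral_hasDerivAt_right (intervalIntegrable_of_continuousOn_Ico hH ht)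
    (hH'.stronglyMeasurableAtFilter isOpen_Ioo t ht) (hH'.continuousAt (isOpen_Ioo.mem_nhds ht))

theorem integral_pos_of_continuousOn_Ico (hH : ContinuousOn H (Ico a b))
    (hpos : ∀ u ∈ Ioo a b, 0 < H u) (ht : t ∈ Ioo a b) : 0 < ∫ u in a..t, H u :=
  intervalIntegral_pos_of_pos_on (intervalIntegrable_of_continuousOn_Ico hH ht)
    (fun u hu => hpos u ⟨hu.1, hu.2.trans ht.2⟩) ht.1

end CumulativeIntegral

theorem eq_const_mul_of_mul_deriv_eq {F G f g : ℝ → ℝ} {s : Set ℝ} (hs : IsOpen s)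
    (hs' : IsPreconnected s) (hF : ∀ x ∈ s, HasDerivAt F (f x) x)
    (hG : ∀ x ∈ s, HasDerivAt G (g x) x) (hF0 : ∀ x ∈ s, F x ≠ 0)
    (hfg : ∀ x ∈ s, F x * g x = G x * f x) {x₀ : ℝ} (hx₀ : x₀ ∈ s) :
    ∀ x ∈ s, G x = G x₀ / F x₀ * F x := by
  have hquot : ∀ x ∈ s, HasDerivAt (fun y => G y / F y) 0 x := fun x hx =>
    ((hG x hx).div (hF x hx) (hF0 x hx)).congr_deriv (by
      rw [mul_comm (g x), hfg x hx, sub_self, zero_div])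
  intro x hx
  have hconst : G x / F x = G x₀ / F x₀ :=
    hs.is_const_of_deriv_eq_zero hs'
      (fun y hy => (hquot y hy).differentiableAt.differentiableWithinAt)
      (fun y hy => (hquot y hy).deriv) hx hx₀
  rw [← hconst, div_mul_cancel₀ _ (hF0 x hx)]

theorem stmt7_general (HX HY : ℝ → ℝ) (b : ℝ) (hb : 0 < b)
    (hHXcont : ContinuousOn HX (Set.Ico 0 b)) (hHYcont : ContinuousOn HY (Set.Ico 0 b))
    (hHXpos : ∀ t ∈ Set.Ioo (0:ℝ) b, 0 < HX t)
    (hHYpos : ∀ t ∈ Set.Ioo (0:ℝ) b, 0 < HY t) :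
    (∃ α : ℝ, 0 < α ∧ ∀ t ∈ Set.Ioo (0:ℝ) b, HY t = α * HX t) ↔
      (∀ t ∈ Set.Ioo (0:ℝ) b, GTindex HX t = GTindex HY t) := by
  constructor
  · rintro ⟨α, hα, hY⟩ t ht
    rw [GTindex_congr_s7 ht.1 (fun u hu => hY u ⟨hu.1, hu.2.trans_lt ht.2⟩),
      GTindex_const_mul hα.ne']
  · intro hGT
    have hFpos {t} (ht : t ∈ Ioo 0 b) := integral_pos_of_continuousOn_Ico hHXcont hHXpos ht
    have hGpos {t} (ht : t ∈ Ioo 0 b) := integral_pos_of_continuousOn_Ico hHYcont hHYpos ht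
    have hFG : ∀ t ∈ Ioo 0 b,
        (∫ u in (0:ℝ)..t, HX u) * HY t = (∫ u in (0:ℝ)..t, HY u) * HX t := fun t ht =>
      (GTindex_eq_GTindex_iff ht.1.ne' (hHXpos t ht).ne' (hHYpos t ht).ne').1 (hGT t ht)
    have hmid : b / 2 ∈ Ioo 0 b := ⟨half_pos hb, half_lt_self hb⟩
    have hGF := eq_const_mul_of_mul_deriv_eq isOpen_Ioo isPreconnected_Ioo
      (fun t ht => hasDerivAt_integral_of_continuousOn_Ico hHXcont ht)
      (fun t ht => hasDerivAt_integral_of_continuousOn_Ico hHYcont ht)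
      (fun t ht => (hFpos ht).ne') hFG hmid
    refine ⟨_, div_pos (hGpos hmid) (hFpos hmid), fun t ht => ?_⟩
    have h := hFG t ht
    rw [hGF t ht] at h
    exact mul_left_cancel₀ (hFpos ht).ne' (by linear_combination h)

/-- Proportional hazards characterization: `P(Y > t) = P(X > t)^α` on the common support
`D¹ = (0,b)` (equivalently `H_Y = α·H_X`) for some `α > 0` iff `GT_X = GT_Y` on `D¹`. -/
theorem stmt7 (HX HY : ℝ → ℝ) (b : ℝ) (hb : 0 < b)
    (hHX0 : HX 0 = 0) (hHY0 : HY 0 = 0)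
    (hHXcont : ContinuousOn HX (Set.Ico 0 b)) (hHYcont : ContinuousOn HY (Set.Ico 0 b))
    (hHXpos : ∀ t ∈ Set.Ioo (0:ℝ) b, 0 < HX t)
    (hHYpos : ∀ t ∈ Set.Ioo (0:ℝ) b, 0 < HY t) :
    (∃ α : ℝ, 0 < α ∧ ∀ t ∈ Set.Ioo (0:ℝ) b, HY t = α * HX t) ↔
      (∀ t ∈ Set.Ioo (0:ℝ) b, GTindex HX t = GTindex HY t) :=
  stmt7_general HX HY b hb hHXcont hHYcont hHXpos hHYpos
end

section
/- For random lifetimes X and Y and positive constants a, b, the cumulative hazard of aX+b is H_{aX+b}(t) = H_X((t-b)/a), and X ≤_GT Y holds if and only if aX+b ≤_GT aY+b. -/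
open MeasureTheory intervalIntegral

/-! The substitution `u = a s + b` turns `∫₀^{at+b} H_X((u-b)/a) du` into `a ∫_{-b/a}^t H_X`,
which is `a ∫₀^t H_X` because `X ≥ 0` forces `H_X = 0` on `(-∞, 0)`. Hence
`GT_{aX+b}(at+b) = 1 - (at/(at+b)) (1 - GT_X(t))`, an increasing affine function of `GT_X(t)`
when `t > 0`; when `t ≤ 0` every index involved equals `1`. -/

noncomputable def cumHazard {Ω : Type*} [MeasurableSpace Ω] (μ : Measure Ω) (X : Ω → ℝ)
    (t : ℝ) : ℝ :=
  -Real.log (μ {ω | X ω > t}).toReal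

section CumHazard

variable {Ω : Type*} [MeasurableSpace Ω] (μ : Measure Ω) {X : Ω → ℝ}

theorem cumHazard_affine {a : ℝ} (ha : 0 < a) (b t : ℝ) :
    cumHazard μ (fun ω => a * X ω + b) t = cumHazard μ X ((t - b) / a) := by
  have hset : {ω | a * X ω + b > t} = {ω | X ω > (t - b) / a} := by
    ext ω
    simp only [Set.mem_ofPred_eq, gt_iff_lt, div_lt_iff₀ ha]
    constructor <;> intro h <;> linarith
  rw [cumHazard, hset, cumHazard]

theorem cumHazard_of_neg [IsProbabilityMeasure μ] (hX : ∀ ω, 0 ≤ X ω) {t : ℝ} (ht : t < 0) :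
    cumHazard μ X t = 0 := by
  have huniv : {ω | X ω > t} = Set.univ :=
    Set.eq_univ_of_forall fun ω => ht.trans_le (hX ω)
  rw [cumHazard, huniv, measure_univ, ENNReal.toReal_one, Real.log_one, neg_zero]

end CumHazard

section VanishingOnNeg

variable {H : ℝ → ℝ}

theorem ae_eq_zero_of_nonpos (hH : ∀ x < 0, H x = 0) : ∀ᵐ x, x ≤ 0 → H x = 0 := by
  filter_upwards [Measure.ae_ne volume 0] with x hx0 hx
  exact hH x (hx.lt_of_ne hx0)

theorem integral_eq_zero_of_nonpos (hH : ∀ x < 0, H x = 0) {p q : ℝ} (hp : p ≤ 0) (hq : q ≤ 0) :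
    ∫ x in p..q, H x = 0 := by
  rw [← integral_zero (a := p) (b := q) (μ := volume) (E := ℝ)]
  refine integral_congr_ae ?_
  filter_upwards [ae_eq_zero_of_nonpos hH] with x hx hmem
  exact hx ((Set.mem_uIoc.mp hmem).elim (fun h => h.2.trans hq) fun h => h.2.trans hp)

theorem integral_eq_integral_zero_of_nonpos (hH : ∀ x < 0, H x = 0) {c : ℝ} (hc : c ≤ 0)
    (t : ℝ) : ∫ x in c..t, H x = ∫ x in 0..t, H x := by
  rcases le_or_gt t 0 with ht | ht
  · rw [integral_eq_zero_of_nonpos hH hc ht, integral_eq_zero_of_nonpos hH le_rfl ht]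
  rw [integral_of_le (hc.trans ht.le), integral_of_le ht.le]
  refine setIntegral_eq_of_subset_of_ae_sdiff_eq_zero measurableSet_Ioc.nullMeasurableSet
    (Set.Ioc_subset_Ioc_left hc) ?_
  filter_upwards [ae_eq_zero_of_nonpos hH] with x hx hmem
  exact hx (not_lt.mp fun h => hmem.2 ⟨h, hmem.1.2⟩)

theorem integral_comp_affine_of_nonpos (hH : ∀ x < 0, H x = 0) {a b : ℝ} (ha : 0 < a)
    (hb : 0 ≤ b) (t : ℝ) :
    ∫ u in 0..a * t + b, H ((u - b) / a) = a * ∫ u in 0..t, H u := by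
  have hsub : ∀ u, (u - b) / a = u / a - b / a := fun u => sub_div u b a
  have hend : (a * t + b) / a - b / a = t := by field_simp; ring
  simp only [hsub]
  rw [integral_comp_div_sub H ha.ne', hend, zero_div, zero_sub, smul_eq_mul,
    integral_eq_integral_zero_of_nonpos hH (neg_nonpos.mpr (div_nonneg hb ha.le))]

-- `t * H t = 0` here, and division by zero gives `0`.
theorem GTindex_of_nonpos (hH : ∀ x < 0, H x = 0) {t : ℝ} (ht : t ≤ 0) : GTindex H t = 1 := by
  rcases ht.lt_or_eq with ht | rfl
  · simp [GTindex, hH t ht]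
  · simp [GTindex]

theorem GTindex_comp_affine (hH : ∀ x < 0, H x = 0) {a b : ℝ} (ha : 0 < a) (hb : 0 ≤ b)
    (t : ℝ) :
    GTindex (fun s => H ((s - b) / a)) (a * t + b) =
      1 - a * t / (a * t + b) * (1 - GTindex H t) := by
  have hend : (a * t + b - b) / a = t := by field_simp; ring
  simp only [GTindex, hend, integral_comp_affine_of_nonpos hH ha hb, sub_sub_cancel]
  rcases eq_or_ne t 0 with rfl | ht
  · simp
  · field_simp

theorem GTindex_comp_affine_le_iff {HX HY : ℝ → ℝ} (hX : ∀ x < 0, HX x = 0)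
    (hY : ∀ x < 0, HY x = 0) {a b : ℝ} (ha : 0 < a) (hb : 0 ≤ b) (t : ℝ) :
    GTindex (fun s => HX ((s - b) / a)) (a * t + b) ≤
        GTindex (fun s => HY ((s - b) / a)) (a * t + b) ↔
      GTindex HX t ≤ GTindex HY t := by
  rw [GTindex_comp_affine hX ha hb, GTindex_comp_affine hY ha hb]
  rcases le_or_gt t 0 with ht | ht
  · simp [GTindex_of_nonpos hX ht, GTindex_of_nonpos hY ht]
  · have hr : 0 < a * t / (a * t + b) := by positivity
    rw [sub_le_sub_iff_left, mul_le_mul_iff_right₀ hr, sub_le_sub_iff_left]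

end VanishingOnNeg

/-- For `a, b > 0`: the cumulative hazard of `aX+b` is `H_X((t-b)/a)` for `t > b`, and
`X ≤_GT Y` iff `aX+b ≤_GT aY+b` (the latter compared on the transformed common domain). -/
theorem stmt9 {Ω : Type*} [MeasurableSpace Ω] (ℙ : Measure Ω) [IsProbabilityMeasure ℙ]
    (X Y : Ω → ℝ) (hX : ∀ ω, 0 ≤ X ω) (hY : ∀ ω, 0 ≤ Y ω)
    (a b : ℝ) (ha : 0 < a) (hb : 0 < b)
    (HX HY HaXb HaYb : ℝ → ℝ)
    (hHX : ∀ t, HX t = -Real.log (ℙ {ω | X ω > t}).toReal)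
    (hHY : ∀ t, HY t = -Real.log (ℙ {ω | Y ω > t}).toReal)
    (hHaXb : ∀ t, HaXb t = -Real.log (ℙ {ω | a * X ω + b > t}).toReal)
    (hHaYb : ∀ t, HaYb t = -Real.log (ℙ {ω | a * Y ω + b > t}).toReal)
    (D : Set ℝ) :
    (∀ t, b < t → HaXb t = HX ((t - b) / a)) ∧
    ((∀ t ∈ D, GTindex HX t ≤ GTindex HY t) ↔
      (∀ t ∈ D, GTindex HaXb (a * t + b) ≤ GTindex HaYb (a * t + b))) := by
  have hHaXbX : HaXb = fun t => HX ((t - b) / a) :=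
    funext fun t => (hHaXb t).trans <| (cumHazard_affine ℙ ha b t).trans (hHX _).symm
  have hHaYbY : HaYb = fun t => HY ((t - b) / a) :=
    funext fun t => (hHaYb t).trans <| (cumHazard_affine ℙ ha b t).trans (hHY _).symm
  have hXneg : ∀ t < 0, HX t = 0 := fun t ht => (hHX t).trans (cumHazard_of_neg ℙ hX ht)
  have hYneg : ∀ t < 0, HY t = 0 := fun t ht => (hHY t).trans (cumHazard_of_neg ℙ hY ht)
  subst hHaXbX hHaYbY
  exact ⟨fun t _ => rfl, forall₂_congr fun t _ =>
    (GTindex_comp_affine_le_iff hXneg hYneg ha hb.le t).symm⟩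
end

section
/- If the ratio H_Y(t)/H_X(t) is nondecreasing in t on D¹ (i.e., X ≤_⋆ Y, X ages slower than Y in average), then X ≤_GT Y, i.e., GT_X(t) ≤ GT_Y(t) for all t ∈ D¹. -/
open MeasureTheory intervalIntegral

/-- If `H_Y/H_X` is nondecreasing on `D¹` (`X ≤_⋆ Y`), then `X ≤_GT Y`. -/
theorem stmt10 (HX HY : ℝ → ℝ) (b : ℝ) (hb : 0 < b)
    (hHX0 : HX 0 = 0) (hHY0 : HY 0 = 0)
    (hHXcont : ContinuousOn HX (Set.Ico 0 b)) (hHYcont : ContinuousOn HY (Set.Ico 0 b))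
    (hHXmono : MonotoneOn HX (Set.Ico 0 b)) (hHYmono : MonotoneOn HY (Set.Ico 0 b))
    (hHXpos : ∀ t ∈ Set.Ioo (0:ℝ) b, 0 < HX t)
    (hHYpos : ∀ t ∈ Set.Ioo (0:ℝ) b, 0 < HY t)
    (hstar : MonotoneOn (fun t => HY t / HX t) (Set.Ioo (0:ℝ) b)) :
    ∀ t ∈ Set.Ioo (0:ℝ) b, GTindex HX t ≤ GTindex HY t := by
  intro t ht
  obtain ⟨ht0, htb⟩ := ht
  have hXt : 0 < HX t := hHXpos t ⟨ht0, htb⟩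
  have hYt : 0 < HY t := hHYpos t ⟨ht0, htb⟩
  have hsub : Set.Icc (0:ℝ) t ⊆ Set.Ico 0 b := fun u hu => ⟨hu.1, lt_of_le_of_lt hu.2 htb⟩
  have hXint : IntervalIntegrable HX volume 0 t := by
    rw [intervalIntegrable_iff_integrableOn_Icc_of_le ht0.le]
    exact (hHXcont.mono hsub).integrableOn_compact isCompact_Icc
  have hYint : IntervalIntegrable HY volume 0 t := by
    rw [intervalIntegrable_iff_integrableOn_Icc_of_le ht0.le]
    exact (hHYcont.mono hsub).integrableOn_compact isCompact_Icc
  -- pointwise inequality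
  have hpt : ∀ u ∈ Set.Icc (0:ℝ) t, HY u * HX t ≤ HX u * HY t := by
    intro u hu
    rcases eq_or_lt_of_le hu.1 with h0 | h0
    · simp [← h0, hHX0, hHY0]
    · have huI : u ∈ Set.Ioo (0:ℝ) b := ⟨h0, lt_of_le_of_lt hu.2 htb⟩
      have hXu : 0 < HX u := hHXpos u huI
      have := hstar huI ⟨ht0, htb⟩ hu.2
      simp only at this
      rw [div_le_div_iff₀ hXu hXt] at this
      linarith
  have hint : (∫ u in (0:ℝ)..t, HY u * HX t) ≤ ∫ u in (0:ℝ)..t, HX u * HY t := by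
    apply intervalIntegral.integral_mono_on ht0.le (hYint.mul_const _) (hXint.mul_const _) hpt
  rw [intervalIntegral.integral_mul_const, intervalIntegral.integral_mul_const] at hint
  unfold GTindex
  have key : 2 / (t * HY t) * (∫ u in (0:ℝ)..t, HY u) ≤
      2 / (t * HX t) * (∫ u in (0:ℝ)..t, HX u) := by
    rw [div_mul_eq_mul_div, div_mul_eq_mul_div,
      div_le_div_iff₀ (by positivity) (by positivity)]
    nlinarith [hint, ht0]
  linarith
end

section
/- If h_Y(t)/h_X(t) is nondecreasing on D¹ (the order X ≤_c Y), then H_Y(t)/H_X(t) is nondecreasing on D¹ (the order X ≤_⋆ Y). -/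
open Set

/-- If the hazard-rate ratio `h_Y/h_X` is nondecreasing on `D¹ = (0,b)` (`X ≤_c Y`),
then the cumulative-hazard ratio `H_Y/H_X` is nondecreasing there (`X ≤_⋆ Y`). -/
theorem stmt11 (HX HY hX hY : ℝ → ℝ) (b : ℝ) (hb : 0 < b)
    (hHX0 : HX 0 = 0) (hHY0 : HY 0 = 0)
    (hderivX : ∀ u, 0 ≤ u → u < b → HasDerivAt HX (hX u) u)
    (hderivY : ∀ u, 0 ≤ u → u < b → HasDerivAt HY (hY u) u)
    (hhXpos : ∀ t ∈ Set.Ioo (0:ℝ) b, 0 < hX t)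
    (hhYpos : ∀ t ∈ Set.Ioo (0:ℝ) b, 0 < hY t)
    (hHXpos : ∀ t ∈ Set.Ioo (0:ℝ) b, 0 < HX t)
    (hHYpos : ∀ t ∈ Set.Ioo (0:ℝ) b, 0 < HY t)
    (hc : MonotoneOn (fun t => hY t / hX t) (Set.Ioo (0:ℝ) b)) :
    MonotoneOn (fun t => HY t / HX t) (Set.Ioo (0:ℝ) b) := by
  -- Key: HY t / HX t ≤ hY t / hX t on (0,b), by Cauchy MVT on [0,t].
  have key : ∀ t ∈ Set.Ioo (0:ℝ) b, HY t / HX t ≤ hY t / hX t := by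
    intro t ht
    obtain ⟨ht0, htb⟩ := ht
    have hsub : Icc (0:ℝ) t ⊆ Ico 0 b := fun u hu => ⟨hu.1, lt_of_le_of_lt hu.2 htb⟩
    have hcontX : ContinuousOn HX (Icc 0 t) := fun u hu =>
      ((hderivX u (hsub hu).1 (hsub hu).2).continuousAt).continuousWithinAt
    have hcontY : ContinuousOn HY (Icc 0 t) := fun u hu =>
      ((hderivY u (hsub hu).1 (hsub hu).2).continuousAt).continuousWithinAt
    obtain ⟨c, hc', heq⟩ := exists_ratio_hasDerivAt_eq_ratio_slope HY hY ht0 hcontY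
      (fun u hu => hderivY u hu.1.le (hu.2.trans htb)) HX hX hcontX
      (fun u hu => hderivX u hu.1.le (hu.2.trans htb))
    have hcmem : c ∈ Set.Ioo (0:ℝ) b := ⟨hc'.1, hc'.2.trans htb⟩
    rw [hHX0, hHY0, sub_zero, sub_zero] at heq
    have h1 : HY t / HX t = hY c / hX c := by
      rw [div_eq_div_iff (hHXpos t ⟨ht0, htb⟩).ne' (hhXpos c hcmem).ne']
      linarith [heq]
    rw [h1]
    exact hc hcmem ⟨ht0, htb⟩ hc'.2.le
  intro s hs t ht hst
  rcases eq_or_lt_of_le hst with rfl | hst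
  · exact le_refl _
  -- use monotonicity on [s,t] from nonneg derivative
  have hsub : Icc s t ⊆ Set.Ioo (0:ℝ) b := fun u hu => ⟨lt_of_lt_of_le hs.1 hu.1,
    lt_of_le_of_lt hu.2 ht.2⟩
  have hder : ∀ u ∈ Icc s t, HasDerivAt (fun x => HY x / HX x)
      ((hY u * HX u - HY u * hX u) / (HX u)^2) u := by
    intro u hu
    have hu' := hsub hu
    exact (hderivY u hu'.1.le (hu'.2)).div (hderivX u hu'.1.le (hu'.2)) (hHXpos u hu').ne'
  have hder0 : ∀ u ∈ interior (Icc s t), 0 ≤ deriv (fun x => HY x / HX x) u := by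
    intro u hu
    rw [interior_Icc] at hu
    have hu' : u ∈ Icc s t := ⟨hu.1.le, hu.2.le⟩
    rw [(hder u hu').deriv]
    have hum := hsub hu'
    have h2 : HY u * hX u ≤ hY u * HX u := by
      have := key u hum
      rw [div_le_div_iff₀ (hHXpos u hum) (hhXpos u hum)] at this
      linarith
    apply div_nonneg (by linarith) (sq_nonneg _)
  have hcont : ContinuousOn (fun x => HY x / HX x) (Icc s t) := fun u hu =>
    ((hder u hu).continuousAt).continuousWithinAt
  have hdiff : DifferentiableOn ℝ (fun x => HY x / HX x) (interior (Icc s t)) := by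
    intro u hu
    rw [interior_Icc] at hu
    exact ((hder u ⟨hu.1.le, hu.2.le⟩).differentiableAt).differentiableWithinAt
  exact monotoneOn_of_deriv_nonneg (convex_Icc s t) hcont hdiff hder0
    ⟨le_refl s, hst.le⟩ ⟨hst.le, le_refl t⟩ hst.le
end

section
/- Let T_S = min(X_1,…,X_n) be the lifetime of a series system with independent components, and T_{S∖{j}} the minimum over all components except the j-th. Then GT_{T_S}(t) ≥ GT_{X_j}(t) for all t if and only if GT_{T_{S∖{j}}}(t) ≥ GT_{X_j}(t) for all t. -/
open MeasureTheory intervalIntegral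

/-!
Writing `GT_H(t) = 1 - (2/t) · (∫₀ᵗ H) / H(t)`, comparing GT indices at `t` amounts to comparing
the ratios `(∫₀ᵗ H) / H(t)`. For the series system both numerator and denominator are additive in
the components, so the ratio of `T_S` is the mediant of those of `X_j` and `T_{S∖{j}}`; a mediant
lies below `a / c` exactly when the other fraction does.
-/

theorem add_div_add_le_div_iff {K : Type*} [Field K] [LinearOrder K] [IsStrictOrderedRing K]
    {a b c d : K} (hc : 0 < c) (hd : 0 < d) :
    (a + b) / (c + d) ≤ a / c ↔ b / d ≤ a / c := by
  rw [div_le_div_iff₀ (by positivity) hc, div_le_div_iff₀ hd hc]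
  constructor <;> intro h <;> linarith

theorem GTindex_eq (H : ℝ → ℝ) (t : ℝ) :
    GTindex H t = 1 - 2 / t * ((∫ u in (0:ℝ)..t, H u) / H t) := by
  rw [GTindex]
  ring

theorem GTindex_le_GTindex_iff {H G : ℝ → ℝ} {t : ℝ} (ht : 0 < t) :
    GTindex H t ≤ GTindex G t ↔
      (∫ u in (0:ℝ)..t, G u) / G t ≤ (∫ u in (0:ℝ)..t, H u) / H t := by
  rw [GTindex_eq, GTindex_eq, sub_le_sub_iff_left,
    mul_le_mul_iff_of_pos_left (div_pos two_pos ht)]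

theorem GTindex_le_GTindex_add_iff {H G : ℝ → ℝ} {t : ℝ} (ht : 0 < t)
    (hH : IntervalIntegrable H volume 0 t) (hG : IntervalIntegrable G volume 0 t)
    (hHt : 0 < H t) (hGt : 0 < G t) :
    GTindex H t ≤ GTindex (fun s => H s + G s) t ↔ GTindex H t ≤ GTindex G t := by
  rw [GTindex_le_GTindex_iff ht, GTindex_le_GTindex_iff ht, integral_add hH hG]
  exact add_div_add_le_div_iff hHt hGt

theorem stmt12_general (n : ℕ) (hn : 2 ≤ n) (H : Fin n → ℝ → ℝ) (j : Fin n)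
    (D : Set ℝ) (hD : D ⊆ Set.Ioi (0:ℝ))
    (hHcont : ∀ i, ContinuousOn (H i) (Set.Ici 0))
    (hHpos : ∀ i, ∀ t ∈ D, 0 < H i t) :
    (∀ t ∈ D, GTindex (H j) t ≤ GTindex (fun s => ∑ i, H i s) t) ↔
      (∀ t ∈ D, GTindex (H j) t ≤
        GTindex (fun s => ∑ i ∈ Finset.univ.erase j, H i s) t) := by
  obtain ⟨k, hkj⟩ : ∃ k, k ≠ j :=
    Fintype.exists_ne_of_one_lt_card (by rw [Fintype.card_fin]; omega) j
  have hsplit : (fun s => ∑ i, H i s) = fun s => H j s + ∑ i ∈ Finset.univ.erase j, H i s :=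
    funext fun s => (Finset.add_sum_erase _ (fun i => H i s) (Finset.mem_univ j)).symm
  refine forall₂_congr fun t htD => ?_
  have ht : 0 < t := hD htD
  have hint : ∀ i, IntervalIntegrable (H i) volume 0 t := fun i =>
    ((hHcont i).mono (by simp [Set.uIcc_of_le ht.le, Set.Icc_subset_Ici_self])).intervalIntegrable
  rw [hsplit]
  have hrest_pos : 0 < ∑ i ∈ Finset.univ.erase j, H i t :=
    Finset.sum_pos (fun i _ => hHpos i t htD) ⟨k, Finset.mem_erase.mpr ⟨hkj, Finset.mem_univ k⟩⟩
  exact GTindex_le_GTindex_add_iff ht (hint j)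
    (by rw [← Finset.sum_fn]; exact IntervalIntegrable.sum _ fun i _ => hint i)
    (hHpos j t htD) hrest_pos

/-- For a series system of `n` independent components with cumulative hazards `H i`
(so `H_{T_S} = ∑ i, H i` and `H_{T_{S∖{j}}} = ∑_{i ≠ j} H i`):
`GT_{T_S} ≥ GT_{X_j}` on `D¹` iff `GT_{T_{S∖{j}}} ≥ GT_{X_j}` on `D¹`. -/
theorem stmt12 (n : ℕ) (hn : 2 ≤ n) (H : Fin n → ℝ → ℝ) (j : Fin n)
    (D : Set ℝ) (hD : D ⊆ Set.Ioi (0:ℝ))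
    (hH0 : ∀ i, H i 0 = 0)
    (hHcont : ∀ i, ContinuousOn (H i) (Set.Ici 0))
    (hHpos : ∀ i, ∀ t ∈ D, 0 < H i t) :
    (∀ t ∈ D, GTindex (H j) t ≤ GTindex (fun s => ∑ i, H i s) t) ↔
      (∀ t ∈ D, GTindex (H j) t ≤
        GTindex (fun s => ∑ i ∈ Finset.univ.erase j, H i s) t) :=
  stmt12_general n hn H j D hD hHcont hHpos
end

section
/- For a series system of two independent components with lifetimes X_1, X_2 and system lifetime T_S = min(X_1, X_2): T_S ≥_GT X_1 (i.e., GT_{T_S}(t) ≥ GT_{X_1}(t) for all t ∈ D¹) if and only if X_2 ≥_GT X_1. -/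
open MeasureTheory intervalIntegral

/-- For a series system of two independent components (`H_{T_S} = H₁ + H₂`):
`T_S ≥_GT X₁` iff `X₂ ≥_GT X₁`. -/
theorem stmt13 (H1 H2 : ℝ → ℝ) (D : Set ℝ) (hD : D ⊆ Set.Ioi (0:ℝ))
    (hH10 : H1 0 = 0) (hH20 : H2 0 = 0)
    (hH1cont : ContinuousOn H1 (Set.Ici 0)) (hH2cont : ContinuousOn H2 (Set.Ici 0))
    (hH1pos : ∀ t ∈ D, 0 < H1 t) (hH2pos : ∀ t ∈ D, 0 < H2 t) :
    (∀ t ∈ D, GTindex H1 t ≤ GTindex (fun s => H1 s + H2 s) t) ↔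
      (∀ t ∈ D, GTindex H1 t ≤ GTindex H2 t) := by
  have key : ∀ t ∈ D, (GTindex H1 t ≤ GTindex (fun s => H1 s + H2 s) t ↔
      GTindex H1 t ≤ GTindex H2 t) := by
    intro t htD
    have ht : (0:ℝ) < t := hD htD
    have h1 : 0 < H1 t := hH1pos t htD
    have h2 : 0 < H2 t := hH2pos t htD
    have hsub : Set.uIcc (0:ℝ) t ⊆ Set.Ici 0 := by
      rw [Set.uIcc_of_le ht.le]
      exact fun x hx => hx.1
    have hi1 : IntervalIntegrable H1 volume 0 t :=
      (hH1cont.mono hsub).intervalIntegrable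
    have hi2 : IntervalIntegrable H2 volume 0 t :=
      (hH2cont.mono hsub).intervalIntegrable
    set a1 := ∫ u in (0:ℝ)..t, H1 u with ha1
    set a2 := ∫ u in (0:ℝ)..t, H2 u with ha2
    have hadd : (∫ u in (0:ℝ)..t, (H1 u + H2 u)) = a1 + a2 :=
      integral_add hi1 hi2
    have h12 : 0 < H1 t + H2 t := by linarith
    simp only [GTindex, hadd, sub_le_sub_iff_left]
    rw [div_mul_eq_mul_div, div_mul_eq_mul_div, div_mul_eq_mul_div,
      div_le_div_iff₀ (by positivity) (by positivity),
      div_le_div_iff₀ (by positivity) (by positivity)]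
    constructor
    · intro h
      nlinarith [mul_pos ht h1, mul_pos ht h2]
    · intro h
      nlinarith [mul_pos ht h1, mul_pos ht h2]
  constructor
  · intro h t htD; exact (key t htD).mp (h t htD)
  · intro h t htD; exact (key t htD).mpr (h t htD)
end
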